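/- For every M ∈ ℕ ∪ {0} there exists a one-sided shift space over an infinite alphabet that is an (M+1)-step shift space and is not conjugate to any M-step shift space. -/

import Mathlib

open Set Filter Topology

/-- Elements of the full shift `Σ_A`: `Option`-valued sequences that stay `none`
once they are `none` (so they are either everywhere-defined infinite sequences,
or finite words followed by `none`s; the empty word is the all-`none` sequence). -/
def IsWordFun {A : Type*} (x : ℕ → Option A) : Prop :=
  ∀ m n : ℕ, m ≤ n → x m = none → x n = none

/-- The full shift `Σ_A = A^ℕ ∪ {finite words over A}`. -/
def FullShift (A : Type*) : Type _ := {x : ℕ → Option A // IsWordFun x}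

namespace FullShift

variable {A B : Type*}

/-- The length of an element of the full shift, in `ℕ∞`. -/
noncomputable def len (x : FullShift A) : ℕ∞ :=
  sInf {n : ℕ∞ | ∃ m : ℕ, n = (m : ℕ∞) ∧ x.1 m = none}

/-- The shift map `σ`, deleting the first letter. -/
def shift (x : FullShift A) : FullShift A :=
  ⟨fun n => x.1 (n + 1), fun m n h hm => x.2 (m + 1) (n + 1) (by omega) hm⟩

/-- The empty word `∅`. -/
def emptyWord : FullShift A := ⟨fun _ => none, fun _ _ _ _ => rfl⟩

/-- The finite word determined by a list. -/
def word (l : List A) : FullShift A :=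
  ⟨fun n => l[n]?, by
    intro m n h hm
    rw [List.getElem?_eq_none_iff] at hm ⊢
    omega⟩

/-- The infinite sequence determined by a function `ℕ → A`. -/
def infSeq (g : ℕ → A) : FullShift A :=
  ⟨fun n => some (g n), by intro m n _ hm; simp at hm⟩

/-- Generalized cylinder set `Z(w, F)`: elements beginning with the finite word `w`
whose next letter, if any, does not lie in the finite set `F`. -/
def Cyl (w : List A) (F : Finset A) : Set (FullShift A) :=
  {y | (∀ i < w.length, y.1 i = w[i]?) ∧ ∀ a ∈ F, y.1 w.length ≠ some a}

/-- The topology on `Σ_A` generated by the generalized cylinder sets. -/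
instance : TopologicalSpace (FullShift A) :=
  TopologicalSpace.generateFrom {S | ∃ (w : List A) (F : Finset A), S = Cyl w F}

/-- A shift space: closed, shift-invariant, with the infinite-extension property. -/
def IsShiftSpace (Λ : Set (FullShift A)) : Prop :=
  IsClosed Λ ∧ (∀ x ∈ Λ, shift x ∈ Λ) ∧
    ∀ x ∈ Λ, ∀ n : ℕ, len x = (n : ℕ∞) →
      {a : A | ∃ z ∈ Λ, (∀ i < n, z.1 i = x.1 i) ∧ z.1 n = some a}.Infinite

/-- `u` occurs as a subblock of `x`. -/
def Occurs (u : List A) (x : FullShift A) : Prop :=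
  ∃ i : ℕ, ∀ j < u.length, x.1 (i + j) = u[j]?

/-- The infinite sequences avoiding every word in `Fb` as a subblock. -/
def XinfL (Fb : Set (List A)) : Set (FullShift A) :=
  {x | (∀ n, x.1 n ≠ none) ∧ ∀ u ∈ Fb, ¬ Occurs u x}

/-- The shift space `X_F` determined by the forbidden words `Fb`: the infinite
sequences avoiding `Fb`, together with the finite words `x` such that for
infinitely many `a ∈ A` some extension `x a y` lies in `X_F^inf`. -/
def XL (Fb : Set (List A)) : Set (FullShift A) :=
  XinfL Fb ∪ {x | ∃ n : ℕ, len x = (n : ℕ∞) ∧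
    {a : A | ∃ z ∈ XinfL Fb, (∀ i < n, z.1 i = x.1 i) ∧ z.1 n = some a}.Infinite}

/-- The infinite sequences all of whose length-`N` windows `v` satisfy `ft v = true`
(i.e. avoiding all length-`N` words `w` with `ft w = 0`). -/
def XinfT {N : ℕ} (ft : (Fin N → A) → Bool) : Set (FullShift A) :=
  {x | (∀ n, x.1 n ≠ none) ∧
    ∀ (i : ℕ) (v : Fin N → A), (∀ j : Fin N, x.1 (i + (j : ℕ)) = some (v j)) → ft v = true}

/-- The shift space `X_f` determined by forbidding the length-`N` words `w`
with `ft w = 0`. -/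
def XT {N : ℕ} (ft : (Fin N → A) → Bool) : Set (FullShift A) :=
  XinfT ft ∪ {x | ∃ n : ℕ, len x = (n : ℕ∞) ∧
    {a : A | ∃ z ∈ XinfT ft, (∀ i < n, z.1 i = x.1 i) ∧ z.1 n = some a}.Infinite}

/-- `Y` is an `M`-step shift space: determined by forbidden words of length `M + 1`,
equivalently by a function `g̃ : B^{M+1} → {0,1}`. -/
def IsStepShift (M : ℕ) (Y : Set (FullShift B)) : Prop :=
  ∃ gt : (Fin (M + 1) → B) → Bool, Y = XT gt

/-- `φ` is a conjugacy from `Λ` onto `Y`: bijective, continuous, shift-commuting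
and length-preserving. -/
def IsConjugacy (Λ : Set (FullShift A)) (Y : Set (FullShift B))
    (φ : FullShift A → FullShift B) : Prop :=
  Set.BijOn φ Λ Y ∧ ContinuousOn φ Λ ∧
    (∀ x ∈ Λ, φ (shift x) = shift (φ x)) ∧ ∀ x ∈ Λ, len (φ x) = len x

/-- `Λ` and `Y` are conjugate shift spaces. -/
def Conjugate (Λ : Set (FullShift A)) (Y : Set (FullShift B)) : Prop :=
  ∃ φ : FullShift A → FullShift B, IsConjugacy Λ Y φ

/-- The periodic sequence `(x_1 ⋯ x_M b)^∞` of period `M + 1`. -/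
def per (M : ℕ) (x : Fin M → A) (b : A) : ℕ → A :=
  fun n => if h : n % (M + 1) < M then x ⟨n % (M + 1), h⟩ else b

end FullShift

/-!
Let `Λ = X_f` over `ℕ` be the `(M+1)`-step shift whose allowed `(M+2)`-windows are those of the
periodic points `(0^M b)^∞`. Every infinite point of `Λ` has period `M + 1`, and a conjugacy
transports this to the infinite points of its image `Y`. In an `M`-step shift `Y`, two infinite
points with period `M + 1` that share their first `M` letters can be spliced along a common block
of length `M` into a point that is not `(M+1)`-periodic unless they coincide, so such points are
determined by their first `M` letters. On the other hand the points `(0^M b)^∞` converge to the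
word `0^M` as `b → ∞`, so by continuity their images eventually share their first `M` letters;
they would then coincide, contradicting injectivity.
-/

namespace FullShift

variable {A B : Type*}

section Basic

lemma shift_iterate_apply (x : FullShift A) (k n : ℕ) : (shift^[k] x).1 n = x.1 (n + k) := by
  induction k generalizing x with
  | zero => rfl
  | succ k ih => rw [Function.iterate_succ_apply, ih]; rfl

lemma infSeq_injective : Function.Injective (infSeq : (ℕ → A) → FullShift A) :=
  fun _ _ h => funext fun n => Option.some_injective _ (congrFun (congrArg Subtype.val h) n)

lemma shift_iterate_infSeq (g : ℕ → A) (k : ℕ) :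
    shift^[k] (infSeq g) = infSeq (fun n => g (n + k)) :=
  Subtype.ext <| funext fun n => shift_iterate_apply _ k n

lemma shift_iterate_infSeq_eq_self_iff (g : ℕ → A) (p : ℕ) :
    shift^[p] (infSeq g) = infSeq g ↔ Function.Periodic g p := by
  rw [shift_iterate_infSeq, infSeq_injective.eq_iff, funext_iff]
  rfl

lemma exists_eq_infSeq {x : FullShift A} (hx : ∀ n, x.1 n ≠ none) : ∃ g, x = infSeq g := by
  choose g hg using fun n => Option.ne_none_iff_exists'.1 (hx n)
  exact ⟨g, Subtype.ext (funext hg)⟩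

lemma apply_ne_none_of_lt_len {x : FullShift A} {n : ℕ} (hn : (n : ℕ∞) < len x) :
    x.1 n ≠ none :=
  fun h => (sInf_le ⟨n, rfl, h⟩ : len x ≤ n).not_gt hn

lemma len_eq_top_iff {x : FullShift A} : len x = ⊤ ↔ ∀ n, x.1 n ≠ none :=
  ⟨fun h n => apply_ne_none_of_lt_len (h ▸ ENat.natCast_lt_top n),
    fun h => sInf_eq_top.2 fun _ ⟨m, _, hm⟩ => absurd hm (h m)⟩

lemma len_word (l : List A) : len (word l) = l.length := by
  refine le_antisymm (sInf_le ⟨l.length, rfl, List.getElem?_eq_none le_rfl⟩) (le_sInf ?_)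
  rintro _ ⟨m, rfl, hm⟩
  exact_mod_cast List.getElem?_eq_none_iff.1 hm

end Basic

section Topology

lemma isOpen_cyl (w : List A) (F : Finset A) : IsOpen (Cyl w F) :=
  TopologicalSpace.isOpen_generateFrom_of_mem ⟨w, F, rfl⟩

lemma tendsto_nhds_of_forall_cyl {ι : Type*} {l : Filter ι} {f : ι → FullShift A}
    {x : FullShift A} (h : ∀ w F, x ∈ Cyl w F → ∀ᶠ i in l, f i ∈ Cyl w F) :
    Tendsto f l (𝓝 x) :=
  TopologicalSpace.tendsto_nhds_generateFrom_iff.2 fun _ ⟨w, F, hs⟩ hx =>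
    hs ▸ h w F (hs ▸ hx)

lemma mem_cyl_of_agree {x y : FullShift A} {w : List A} {F : Finset A} (hx : x ∈ Cyl w F)
    (hxy : ∀ i ≤ w.length, y.1 i = x.1 i) : y ∈ Cyl w F :=
  ⟨fun i hi => (hxy i hi.le).trans (hx.1 i hi), fun a ha => hxy _ le_rfl ▸ hx.2 a ha⟩

lemma eventually_agree_of_tendsto {ι : Type*} {l : Filter ι} {f : ι → FullShift A}
    {x : FullShift A} (hf : Tendsto f l (𝓝 x)) (n : ℕ) (hx : ∀ i < n, x.1 i ≠ none) :
    ∀ᶠ b in l, ∀ i < n, (f b).1 i = x.1 i := by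
  choose c hc using fun i : Fin n => Option.ne_none_iff_exists'.1 (hx i i.2)
  have hxc : ∀ i (hi : i < (List.ofFn c).length), x.1 i = (List.ofFn c)[i]? := fun i hi => by
    rw [List.length_ofFn] at hi
    rw [List.getElem?_ofFn, dif_pos hi]
    exact hc ⟨i, hi⟩
  have hmem : x ∈ Cyl (List.ofFn c) ∅ := ⟨hxc, by simp⟩
  filter_upwards [hf ((isOpen_cyl _ _).mem_nhds hmem)] with b hb i hi
  have hi' : i < (List.ofFn c).length := by rwa [List.length_ofFn]
  exact (hb.1 i hi').trans (hxc i hi').symm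

end Topology

section StepShift

lemma infSeq_mem_XinfT_iff {N : ℕ} {ft : (Fin N → A) → Bool} {g : ℕ → A} :
    infSeq g ∈ XinfT ft ↔ ∀ i, ft (fun j : Fin N => g (i + j)) = true := by
  refine ⟨fun h i => h.2 i _ fun _ => rfl, fun h => ⟨fun _ => Option.some_ne_none _, ?_⟩⟩
  intro i v hv
  obtain rfl : v = fun j : Fin N => g (i + j) :=
    funext fun j => (Option.some_injective _ (hv j)).symm
  exact h i

lemma len_eq_top_of_mem_XinfT {N : ℕ} {ft : (Fin N → A) → Bool} {x : FullShift A}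
    (hx : x ∈ XinfT ft) : len x = ⊤ :=
  len_eq_top_iff.2 hx.1

lemma mem_XinfT_of_mem_XT {N : ℕ} {ft : (Fin N → A) → Bool} {x : FullShift A}
    (hx : x ∈ XT ft) (hlen : len x = ⊤) : x ∈ XinfT ft := by
  rcases hx with hx | ⟨n, hn, -⟩
  · exact hx
  · exact absurd (hlen.symm.trans hn) (ENat.top_ne_natCast n)

lemma mapsTo_shift_XinfT {N : ℕ} (ft : (Fin N → A) → Bool) :
    MapsTo shift (XinfT ft) (XinfT ft) := fun x hx =>
  ⟨fun n => hx.1 (n + 1), fun i v hv => hx.2 (i + 1) v fun j => by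
    rw [Nat.add_right_comm]; exact hv j⟩

lemma infSeq_splice_mem_XinfT {M : ℕ} {ft : (Fin (M + 1) → A) → Bool} {g h : ℕ → A}
    (k : ℕ) (hg : infSeq g ∈ XinfT ft) (hh : infSeq h ∈ XinfT ft)
    (hgh : ∀ n, k ≤ n → n < k + M → g n = h n) :
    infSeq (fun n => if n < k + M then g n else h n) ∈ XinfT ft := by
  rw [infSeq_mem_XinfT_iff] at hg hh ⊢
  intro i
  by_cases hi : i < k
  · convert hg i using 2
    funext j
    rw [if_pos (by omega)]
  · convert hh i using 2
    funext j
    split_ifs with hj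
    · exact hgh _ (by omega) hj
    · rfl

lemma eq_of_agree_of_forall_periodic {M : ℕ} {ft : (Fin (M + 1) → A) → Bool}
    (hper : ∀ y ∈ XinfT ft, shift^[M + 1] y = y) {y₁ y₂ : FullShift A} (h₁ : y₁ ∈ XinfT ft)
    (h₂ : y₂ ∈ XinfT ft) (hagree : ∀ i < M, y₁.1 i = y₂.1 i) : y₁ = y₂ := by
  obtain ⟨g₁, rfl⟩ := exists_eq_infSeq h₁.1
  obtain ⟨g₂, rfl⟩ := exists_eq_infSeq h₂.1
  have hp₁ := (shift_iterate_infSeq_eq_self_iff _ _).1 (hper _ h₁)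
  have hp₂ := (shift_iterate_infSeq_eq_self_iff _ _).1 (hper _ h₂)
  have hlt : ∀ i < M, g₁ i = g₂ i := fun i hi => Option.some_injective _ (hagree i hi)
  have hM : g₁ M = g₂ M := by
    -- splice along the common block `[M + 1, 2M + 1)`; the splice has `g₁ M` at `M` and
    -- `g₂ M` at `M + (M + 1)`
    have hspl := infSeq_splice_mem_XinfT (M + 1) h₁ h₂ fun n hn hn' => by
      rw [← hp₁.map_mod_nat, ← hp₂.map_mod_nat]
      exact hlt _ (by rw [Nat.mod_eq_sub_mod hn, Nat.mod_eq_of_lt (by omega)]; omega)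
    have := (shift_iterate_infSeq_eq_self_iff _ _).1 (hper _ hspl) M
    simp only [if_pos (by omega : M < M + 1 + M),
      if_neg (by omega : ¬ M + (M + 1) < M + 1 + M), hp₂ M] at this
    exact this.symm
  congr 1
  funext n
  rw [← hp₁.map_mod_nat, ← hp₂.map_mod_nat]
  rcases (Nat.lt_succ_iff.1 (Nat.mod_lt n M.succ_pos)).lt_or_eq with h | h
  · exact hlt _ h
  · rw [h, hM]

end StepShift

section Conjugacy

variable {Λ : Set (FullShift A)} {Y : Set (FullShift B)} {φ : FullShift A → FullShift B}

lemma IsConjugacy.map_shift_iterate (hφ : IsConjugacy Λ Y φ) {S : Set (FullShift A)}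
    (hS : MapsTo shift S S) (hSΛ : S ⊆ Λ) {x : FullShift A} (hx : x ∈ S) (k : ℕ) :
    φ (shift^[k] x) = shift^[k] (φ x) := by
  induction k with
  | zero => rfl
  | succ k ih =>
    rw [Function.iterate_succ_apply', Function.iterate_succ_apply',
      hφ.2.2.1 _ (hSΛ (hS.iterate k hx)), ih]

variable {N N' : ℕ} {ft : (Fin N → A) → Bool} {gt : (Fin N' → B) → Bool}

lemma IsConjugacy.mapsTo_XinfT (hφ : IsConjugacy (XT ft) (XT gt) φ) :
    MapsTo φ (XinfT ft) (XinfT gt) := fun x hx =>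
  mem_XinfT_of_mem_XT (hφ.1.mapsTo (Or.inl hx)) <| by
    rw [hφ.2.2.2 x (Or.inl hx)]; exact len_eq_top_of_mem_XinfT hx

lemma IsConjugacy.surjOn_XinfT (hφ : IsConjugacy (XT ft) (XT gt) φ) :
    SurjOn φ (XinfT ft) (XinfT gt) := fun y hy => by
  obtain ⟨x, hx, rfl⟩ := hφ.1.surjOn (Or.inl hy)
  refine ⟨x, mem_XinfT_of_mem_XT hx ?_, rfl⟩
  rw [← hφ.2.2.2 x hx]
  exact len_eq_top_of_mem_XinfT hy

lemma IsConjugacy.shift_iterate_eq_self (hφ : IsConjugacy (XT ft) (XT gt) φ) {k : ℕ}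
    (hper : ∀ x ∈ XinfT ft, shift^[k] x = x) : ∀ y ∈ XinfT gt, shift^[k] y = y := by
  intro y hy
  obtain ⟨x, hx, rfl⟩ := hφ.surjOn_XinfT hy
  rw [← hφ.map_shift_iterate (mapsTo_shift_XinfT ft) (fun _ => Or.inl) hx, hper x hx]

end Conjugacy

section Example

noncomputable def perWindows (M : ℕ) : (Fin (M + 1 + 1) → ℕ) → Bool :=
  open Classical in
  fun v => decide (∃ s b : ℕ, ∀ j, v j = per M (fun _ => 0) b (s + j))

lemma per_periodic (M : ℕ) (x : Fin M → A) (b : A) : Function.Periodic (per M x b) (M + 1) :=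
  fun n => by simp only [per, Nat.add_mod_right]

lemma per_of_lt {M i : ℕ} (x : Fin M → A) (b : A) (hi : i < M) :
    per M x b i = x ⟨i, hi⟩ := by
  simp only [per, Nat.mod_eq_of_lt (Nat.lt_succ_of_lt hi), dif_pos hi]

lemma per_self (M : ℕ) (x : Fin M → A) (b : A) : per M x b M = b := by
  simp only [per, Nat.mod_eq_of_lt M.lt_succ_self, lt_irrefl, dif_neg, not_false_eq_true]

lemma infSeq_per_mem_XinfT (M b : ℕ) :
    infSeq (per M (fun _ => 0) b) ∈ XinfT (perWindows M) :=
  infSeq_mem_XinfT_iff.2 fun i => by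
    simp only [perWindows, decide_eq_true_eq]
    exact ⟨i, b, fun _ => rfl⟩

lemma shift_iterate_eq_self_of_mem_XinfT_perWindows {M : ℕ} {x : FullShift ℕ}
    (hx : x ∈ XinfT (perWindows M)) : shift^[M + 1] x = x := by
  obtain ⟨g, rfl⟩ := exists_eq_infSeq hx.1
  refine (shift_iterate_infSeq_eq_self_iff _ _).2 fun n => ?_
  obtain ⟨s, b, hsb⟩ := by
    simpa only [perWindows, decide_eq_true_eq] using infSeq_mem_XinfT_iff.1 hx n
  have hlast := hsb (Fin.last _)
  have hfirst := hsb 0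
  simp only [Fin.val_last, Fin.val_zero, add_zero] at hlast hfirst
  rw [hlast, hfirst, per_periodic]

lemma word_replicate_mem_XT (M : ℕ) : word (List.replicate M 0) ∈ XT (perWindows M) := by
  refine Or.inr ⟨M, by rw [len_word, List.length_replicate], ?_⟩
  convert Set.infinite_univ (α := ℕ)
  refine Set.eq_univ_of_forall fun b => ⟨_, infSeq_per_mem_XinfT M b, fun i hi => ?_, ?_⟩
  · simp [infSeq, word, per_of_lt _ _ hi, hi]
  · simp [infSeq, per_self]

lemma tendsto_infSeq_per (M : ℕ) :
    Tendsto (fun b => infSeq (per M (fun _ => 0) b)) atTop (𝓝 (word (List.replicate M 0))) := by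
  have hagree : ∀ b, ∀ i < M,
      (infSeq (per M (fun _ => 0) b)).1 i = (word (List.replicate M 0)).1 i := fun b i hi => by
    simp [infSeq, word, per_of_lt _ _ hi, hi]
  refine tendsto_nhds_of_forall_cyl fun w F hw => ?_
  have hlen : w.length ≤ M := by
    by_contra! h
    have := hw.1 M h
    simp [word, List.getElem?_eq_getElem h] at this
  rcases hlen.lt_or_eq with hlt | rfl
  · exact Eventually.of_forall fun b => mem_cyl_of_agree hw fun i hi => hagree b i (by omega)
  · filter_upwards [Nat.cofinite_eq_atTop ▸ F.eventually_cofinite_notMem] with b hb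
    refine ⟨fun i hi => (hagree b i hi).trans (hw.1 i hi), fun a ha h => hb ?_⟩
    simp only [infSeq, per_self, Option.some_inj] at h
    exact h ▸ ha

lemma not_conjugate_XT_perWindows (M : ℕ) (gt : (Fin (M + 1) → B) → Bool) :
    ¬ Conjugate (XT (perWindows M)) (XT gt) := by
  rintro ⟨φ, hφ⟩
  set p : ℕ → FullShift ℕ := fun b => infSeq (per M (fun _ => 0) b)
  have hw := word_replicate_mem_XT M
  have hperY : ∀ y ∈ XinfT gt, shift^[M + 1] y = y :=
    hφ.shift_iterate_eq_self fun _ => shift_iterate_eq_self_of_mem_XinfT_perWindows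
  have hlim : Tendsto (φ ∘ p) atTop (𝓝 (φ (word (List.replicate M 0)))) :=
    (hφ.2.1 _ hw).tendsto.comp <| tendsto_nhdsWithin_iff.2
      ⟨tendsto_infSeq_per M, Eventually.of_forall fun b => Or.inl (infSeq_per_mem_XinfT M b)⟩
  have hlen : len (φ (word (List.replicate M 0))) = M := by
    rw [hφ.2.2.2 _ hw, len_word, List.length_replicate]
  obtain ⟨b, hb⟩ := (eventually_agree_of_tendsto hlim M fun i hi =>
    apply_ne_none_of_lt_len (by rw [hlen]; exact_mod_cast hi)).exists_forall_of_atTop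
  have hφp : φ (p b) = φ (p (b + 1)) :=
    eq_of_agree_of_forall_periodic hperY (hφ.mapsTo_XinfT (infSeq_per_mem_XinfT M b))
      (hφ.mapsTo_XinfT (infSeq_per_mem_XinfT M (b + 1)))
      fun i hi => (hb b le_rfl i hi).trans (hb (b + 1) b.le_succ i hi).symm
  have hp := congrFun (infSeq_injective (hφ.1.injOn (Or.inl (infSeq_per_mem_XinfT M b))
    (Or.inl (infSeq_per_mem_XinfT M (b + 1))) hφp)) M
  simp only [per_self] at hp
  omega

end Example

end FullShift

/-- For every `M`, there is an `(M+1)`-step shift space over an infinite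
alphabet that is not conjugate to any `M`-step shift space. -/
theorem stmt16 :
    ∀ M : ℕ, ∃ (A : Type) (_ : Infinite A) (Λ : Set (FullShift A)),
      FullShift.IsStepShift (M + 1) Λ ∧
      ∀ (B : Type) [Infinite B] (Y : Set (FullShift B)),
        FullShift.IsStepShift M Y → ¬ FullShift.Conjugate Λ Y := by
  intro M
  refine ⟨ℕ, inferInstance, FullShift.XT (FullShift.perWindows M), ⟨_, rfl⟩, ?_⟩
  rintro B _ Y ⟨gt, rfl⟩
  exact FullShift.not_conjugate_XT_perWindows M gt
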